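/- Let P be a nonzero polynomial with integer coefficients of degree d ≥ 2 and height H. Let α > d and k > 1 be real numbers, and let (a_n)_{n≥1} be a sequence of positive integers with a_n^{α+1} ≤ a_{n+1} < a_n^{kα} for all n ≥ 1. Let θ = ∑_{n=1}^∞ 1/a_n and, for n ≥ 1, let θ_n = ∑_{j=1}^n 1/a_j = p_n/q_n in lowest terms. Then for all sufficiently large n, |P(θ) − P(θ_n)| < H·d·(d+1)/(2·q_n^α). -/

import Mathlib

/-- The height of an integer polynomial: the maximum of the absolute values of its
coefficients. -/
def polyHeight (P : Polynomial ℤ) : ℕ := P.support.sup fun i => (P.coeff i).natAbs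

/-!
The denominator `q_n` divides `a_1 ⋯ a_n`, and the growth condition gives
`2 (a_1 ⋯ a_n)^α ≤ a_n^(α+1) ≤ a_{n+1}`. Since `α > d ≥ 2` the `a_n` grow at least by a factor `4`,
so the tail `θ - θ_n` is at most `(4/3)/a_{n+1} ≤ (2/3) q_n^{-α}`. On `[-1, 1]` the polynomial `P`
is Lipschitz with constant `∑_{i ≤ d} H i = H d (d+1)/2`, and the spare factor `2/3 < 1` makes
the final inequality strict.
-/

open Finset Real Polynomial

lemma Rat.den_sum_one_div_natCast_dvd_prod {ι : Type*} (s : Finset ι) (a : ι → ℕ) :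
    (∑ j ∈ s, 1 / (a j : ℚ)).den ∣ ∏ j ∈ s, a j :=
  (Rat.den_sum_dvd_prod_den s _).trans <| prod_dvd_prod_of_dvd _ _ fun j _ => by
    rw [one_div, Rat.inv_natCast_den]
    split_ifs with h <;> simp [h]

lemma Rat.cast_sum_Icc_one_div_natCast (a : ℕ → ℕ) (n : ℕ) :
    ((∑ j ∈ Icc 1 n, 1 / (a j : ℚ) : ℚ) : ℝ) = ∑ i ∈ range n, ((a (i + 1) : ℝ))⁻¹ := by
  induction n with
  | zero => simp
  | succ n ih => rw [sum_Icc_succ_top (by omega), sum_range_succ, Rat.cast_add, ih]; simp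

lemma abs_coeff_le_polyHeight (P : ℤ[X]) (i : ℕ) : |(P.coeff i : ℝ)| ≤ polyHeight P := by
  rw [← Int.cast_abs, Int.abs_eq_natAbs, Int.cast_natCast, Nat.cast_le]
  by_cases hi : i ∈ P.support
  · exact le_sup (f := fun i => (P.coeff i).natAbs) hi
  · simp [notMem_support_iff.mp hi]

lemma one_le_polyHeight {P : ℤ[X]} (hP : P ≠ 0) : 1 ≤ polyHeight P := by
  obtain ⟨i, hi⟩ := support_nonempty.mpr hP
  exact (Int.natAbs_pos.mpr (mem_support_iff.mp hi)).trans_le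
    (le_sup (f := fun i => (P.coeff i).natAbs) hi)

lemma abs_aeval_sub_aeval_le (P : ℤ[X]) {x y : ℝ} (hx : |x| ≤ 1) (hy : |y| ≤ 1) :
    |aeval x P - aeval y P| ≤
      polyHeight P * (P.natDegree * (P.natDegree + 1) / 2) * |x - y| := by
  have hgauss : ∑ i ∈ range (P.natDegree + 1), (i : ℝ) = P.natDegree * (P.natDegree + 1) / 2 := by
    have := congrArg (Nat.cast : ℕ → ℝ) (sum_range_id_mul_two (P.natDegree + 1))
    push_cast at this
    linarith
  rw [aeval_eq_sum_range, aeval_eq_sum_range, ← sum_sub_distrib, ← hgauss, mul_sum, sum_mul]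
  refine (abs_sum_le_sum_abs _ _).trans (sum_le_sum fun i _ => ?_)
  have hpow : |x ^ i - y ^ i| ≤ |x - y| * i := by
    refine (abs_pow_sub_pow_le x y i).trans ?_
    have : max |x| |y| ^ (i - 1) ≤ 1 := pow_le_one₀ (by positivity) (max_le hx hy)
    exact mul_le_of_le_one_right (by positivity) this
  rw [zsmul_eq_mul, zsmul_eq_mul, ← mul_sub, abs_mul, mul_assoc, mul_comm (i : ℝ)]
  exact mul_le_mul (abs_coeff_le_polyHeight P i) hpow (abs_nonneg _) (Nat.cast_nonneg _)

lemma tsum_inv_le_of_mul_le_succ {b : ℕ → ℝ} {r : ℝ} (hr : 1 < r) (hb0 : 0 < b 0)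
    (hb : ∀ m, r * b m ≤ b (m + 1)) : ∑' m, (b m)⁻¹ ≤ (b 0)⁻¹ * (1 - r⁻¹)⁻¹ := by
  have hgeom : ∀ m, b 0 * r ^ m ≤ b m := fun m => by
    induction m with
    | zero => simp
    | succ m ih => rw [pow_succ]; nlinarith [hb m]
  have hpos : ∀ m, 0 < b 0 * r ^ m := fun m => by positivity
  have hle : ∀ m, (b m)⁻¹ ≤ (b 0)⁻¹ * r⁻¹ ^ m := fun m => by
    rw [inv_pow, ← mul_inv]
    exact inv_anti₀ (hpos m) (hgeom m)
  have hr' : r⁻¹ < 1 := inv_lt_one_of_one_lt₀ hr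
  have hsum : Summable fun m => (b 0)⁻¹ * r⁻¹ ^ m :=
    (summable_geometric_of_lt_one (by positivity) hr').mul_left _
  calc ∑' m, (b m)⁻¹
      ≤ ∑' m, (b 0)⁻¹ * r⁻¹ ^ m :=
        (hsum.of_nonneg_of_le (fun m => (inv_pos.mpr ((hpos m).trans_le (hgeom m))).le)
          hle).tsum_le_tsum hle hsum
    _ = (b 0)⁻¹ * (1 - r⁻¹)⁻¹ := by
        rw [tsum_mul_left, tsum_geometric_of_lt_one (by positivity) hr']

lemma HasSum.sub_sum_range_inv_le {b : ℕ → ℝ} {θ r : ℝ} (hθ : HasSum (fun m => (b m)⁻¹) θ)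
    (hr : 1 < r) (n : ℕ) (hbn : 0 < b n) (hb : ∀ m, n ≤ m → r * b m ≤ b (m + 1)) :
    θ - ∑ i ∈ range n, (b i)⁻¹ ≤ (b n)⁻¹ * (1 - r⁻¹)⁻¹ := by
  rw [← hθ.tsum_eq, ← hθ.summable.sum_add_tsum_nat_add n, add_sub_cancel_left]
  have := tsum_inv_le_of_mul_le_succ (b := fun m => b (m + n)) hr (by simpa using hbn)
    fun m => by simpa [add_right_comm] using hb (m + n) (by omega)
  simpa using this

lemma two_le_of_rpow_le_of_lt_rpow {m : ℕ} (hm : 0 < m) {x s t : ℝ} (hs : (m : ℝ) ^ s ≤ x)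
    (ht : x < (m : ℝ) ^ t) : 2 ≤ m := by
  by_contra! h
  obtain rfl : m = 1 := by omega
  simp only [Nat.cast_one, one_rpow] at hs ht
  linarith

lemma four_mul_le_of_rpow_le {x y α : ℝ} (hx : 2 ≤ x) (hα : 2 ≤ α) (h : x ^ (α + 1) ≤ y) :
    4 * x ≤ y := by
  have hcube : x ^ (3 : ℕ) ≤ x ^ (α + 1) := by
    rw [← rpow_natCast]
    exact rpow_le_rpow_of_exponent_le (by linarith) (by push_cast; linarith)
  nlinarith [sq_nonneg (x - 2)]

lemma two_mul_prod_rpow_le {a : ℕ → ℕ} {α : ℝ}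
    (ha : ∀ n, 1 ≤ n → (2 : ℝ) ≤ a n)
    (hgrow : ∀ n, 1 ≤ n → (a n : ℝ) ^ (α + 1) ≤ a (n + 1)) {n : ℕ} (hn : 1 ≤ n) :
    2 * ((∏ j ∈ Icc 1 n, a j : ℕ) : ℝ) ^ α ≤ (a n : ℝ) ^ (α + 1) := by
  induction n, hn using Nat.le_induction with
  | base =>
    have h1 := ha 1 le_rfl
    rw [Icc_self, prod_singleton, rpow_add (by linarith), rpow_one]
    nlinarith [rpow_nonneg (Nat.cast_nonneg (a 1)) α]
  | succ m hm ih =>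
    have hpos : (0 : ℝ) < a (m + 1) := by linarith [ha (m + 1) (by omega)]
    rw [prod_Icc_succ_top (by omega), Nat.cast_mul, mul_rpow (Nat.cast_nonneg _) hpos.le,
      rpow_add hpos, rpow_one, ← mul_assoc, mul_comm _ (a (m + 1) : ℝ)]
    exact mul_le_mul_of_nonneg_right (ih.trans (hgrow m hm)) (rpow_nonneg hpos.le α)

lemma sub_sum_range_inv_le_of_rpow_le {a : ℕ → ℕ} {α θ : ℝ} (hα : 2 ≤ α)
    (ha : ∀ n, 1 ≤ n → (2 : ℝ) ≤ a n)
    (hgrow : ∀ n, 1 ≤ n → (a n : ℝ) ^ (α + 1) ≤ a (n + 1))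
    (hθ : HasSum (fun m => ((a (m + 1) : ℝ))⁻¹) θ) (n : ℕ) :
    θ - ∑ i ∈ range n, ((a (i + 1) : ℝ))⁻¹ ≤ 4 / 3 * ((a (n + 1) : ℝ))⁻¹ := by
  refine (hθ.sub_sum_range_inv_le (b := fun m => (a (m + 1) : ℝ)) (r := 4) (by norm_num) n
    (by linarith [ha (n + 1) (by omega)])
    fun m _ => four_mul_le_of_rpow_le (ha _ (by omega)) hα (hgrow _ (by omega))).trans_eq ?_
  norm_num
  ring

lemma two_mul_den_rpow_le {a : ℕ → ℕ} {α : ℝ} (hα : 0 ≤ α)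
    (ha : ∀ n, 1 ≤ n → (2 : ℝ) ≤ a n)
    (hgrow : ∀ n, 1 ≤ n → (a n : ℝ) ^ (α + 1) ≤ a (n + 1)) {n : ℕ} (hn : 1 ≤ n) :
    2 * ((∑ j ∈ Icc 1 n, 1 / (a j : ℚ)).den : ℝ) ^ α ≤ a (n + 1) := by
  have hprod : 0 < ∏ j ∈ Icc 1 n, a j :=
    prod_pos fun j hj => by exact_mod_cast (two_pos.trans_le (ha j (mem_Icc.mp hj).1))
  have hle := Nat.le_of_dvd hprod (Rat.den_sum_one_div_natCast_dvd_prod (Icc 1 n) a)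
  calc 2 * ((∑ j ∈ Icc 1 n, 1 / (a j : ℚ)).den : ℝ) ^ α
      ≤ 2 * ((∏ j ∈ Icc 1 n, a j : ℕ) : ℝ) ^ α := by gcongr
    _ ≤ (a n : ℝ) ^ (α + 1) := two_mul_prod_rpow_le ha hgrow hn
    _ ≤ a (n + 1) := hgrow n hn

theorem stmt_11_general (P : Polynomial ℤ) (hP : P ≠ 0) (d : ℕ) (hd : 2 ≤ d)
    (hdeg : P.natDegree = d) (H : ℕ) (hH : polyHeight P = H)
    (α k : ℝ) (hα : (d : ℝ) < α)
    (a : ℕ → ℕ) (ha : ∀ n, 1 ≤ n → 0 < a n)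
    (hgrow : ∀ n, 1 ≤ n → (a n : ℝ) ^ (α + 1) ≤ (a (n + 1) : ℝ))
    (hgrow' : ∀ n, 1 ≤ n → (a (n + 1) : ℝ) < (a n : ℝ) ^ (k * α))
    (θ : ℝ) (hθ : HasSum (fun n : ℕ => (1 : ℝ) / (a (n + 1) : ℝ)) θ) :
    ∃ N : ℕ, ∀ n, N ≤ n →
      |(Polynomial.aeval θ) P -
          (Polynomial.aeval ((∑ j ∈ Finset.Icc 1 n, (1 : ℚ) / (a j : ℚ) : ℚ) : ℝ)) P| <
        (H : ℝ) * d * (d + 1) /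
          (2 * (((∑ j ∈ Finset.Icc 1 n, (1 : ℚ) / (a j : ℚ)).den : ℝ)) ^ α) := by
  have hα2 : (2 : ℝ) ≤ α := le_trans (by exact_mod_cast hd) hα.le
  have ha2 : ∀ n, 1 ≤ n → (2 : ℝ) ≤ a n := fun n hn => by
    exact_mod_cast two_le_of_rpow_le_of_lt_rpow (ha n hn) (hgrow n hn) (hgrow' n hn)
  have hθ' : HasSum (fun m => ((a (m + 1) : ℝ))⁻¹) θ := by simpa only [one_div] using hθ
  have htail := sub_sum_range_inv_le_of_rpow_le hα2 ha2 hgrow hθ'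
  have hθ1 : θ ≤ 1 := by
    have := inv_anti₀ (by norm_num) (ha2 1 le_rfl)
    linarith [htail 0, sum_range_zero fun i => ((a (i + 1) : ℝ))⁻¹]
  refine ⟨1, fun n hn => ?_⟩
  set S : ℚ := ∑ j ∈ Icc 1 n, 1 / (a j : ℚ)
  have hS : (S : ℝ) = ∑ i ∈ range n, ((a (i + 1) : ℝ))⁻¹ := Rat.cast_sum_Icc_one_div_natCast a n
  have hSθ : (S : ℝ) ≤ θ := hS ▸ sum_le_hasSum _ (fun i _ => by positivity) hθ'
  have hS0 : (0 : ℝ) ≤ S := hS ▸ sum_nonneg fun i _ => by positivity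
  have hqpos : (0 : ℝ) < (S.den : ℝ) ^ α := rpow_pos_of_pos (by exact_mod_cast S.pos) α
  have hdist : |θ - S| ≤ 2 / 3 / (S.den : ℝ) ^ α := by
    rw [abs_of_nonneg (by linarith)]
    calc θ - S ≤ 4 / 3 * ((a (n + 1) : ℝ))⁻¹ := hS ▸ htail n
      _ ≤ 4 / 3 * (2 * (S.den : ℝ) ^ α)⁻¹ := by gcongr; exact two_mul_den_rpow_le (by linarith) ha2 hgrow hn
      _ = 2 / 3 / (S.den : ℝ) ^ α := by field_simp; ring
  have hlip := abs_aeval_sub_aeval_le P (x := θ) (y := S) (abs_le.mpr ⟨by linarith, hθ1⟩)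
    (abs_le.mpr ⟨by linarith, by linarith⟩)
  rw [hdeg, hH] at hlip
  have hpos : (0 : ℝ) < H * d * (d + 1) / (2 * (S.den : ℝ) ^ α) := by
    have : (1 : ℝ) ≤ H := by exact_mod_cast hH ▸ one_le_polyHeight hP
    have : (2 : ℝ) ≤ d := by exact_mod_cast hd
    positivity
  calc |aeval θ P - aeval (S : ℝ) P| ≤ H * (d * (d + 1) / 2) * (2 / 3 / (S.den : ℝ) ^ α) :=
        hlip.trans (by gcongr)
    _ = H * d * (d + 1) / (2 * (S.den : ℝ) ^ α) * (2 / 3) := by field_simp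
    _ < H * d * (d + 1) / (2 * (S.den : ℝ) ^ α) := mul_lt_of_lt_one_right hpos (by norm_num)

/-- Let `P ∈ ℤ[X]` be nonzero of degree `d ≥ 2` and height `H`.  Let `α > d`, `k > 1` be
real and `(a_n)_{n≥1}` positive integers with `a_n^{α+1} ≤ a_{n+1} < a_n^{kα}` for all
`n ≥ 1`.  With `θ = ∑_{n=1}^∞ 1/a_n` and `θ_n = p_n/q_n` the `n`-th partial sum in
lowest terms, for all sufficiently large `n` one has
`|P(θ) - P(θ_n)| < H d (d+1) / (2 q_n^α)`. -/
theorem stmt_11 (P : Polynomial ℤ) (hP : P ≠ 0) (d : ℕ) (hd : 2 ≤ d)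
    (hdeg : P.natDegree = d) (H : ℕ) (hH : polyHeight P = H)
    (α k : ℝ) (hα : (d : ℝ) < α) (hk : 1 < k)
    (a : ℕ → ℕ) (ha : ∀ n, 1 ≤ n → 0 < a n)
    (hgrow : ∀ n, 1 ≤ n → (a n : ℝ) ^ (α + 1) ≤ (a (n + 1) : ℝ))
    (hgrow' : ∀ n, 1 ≤ n → (a (n + 1) : ℝ) < (a n : ℝ) ^ (k * α))
    (θ : ℝ) (hθ : HasSum (fun n : ℕ => (1 : ℝ) / (a (n + 1) : ℝ)) θ) :
    ∃ N : ℕ, ∀ n, N ≤ n →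
      |(Polynomial.aeval θ) P -
          (Polynomial.aeval ((∑ j ∈ Finset.Icc 1 n, (1 : ℚ) / (a j : ℚ) : ℚ) : ℝ)) P| <
        (H : ℝ) * d * (d + 1) /
          (2 * (((∑ j ∈ Finset.Icc 1 n, (1 : ℚ) / (a j : ℚ)).den : ℝ)) ^ α) :=
  stmt_11_general P hP d hd hdeg H hH α k hα a ha hgrow hgrow' θ hθ
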